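/- Let H be a complex Hilbert space, n ≥ 1, ε > 0, and let η, ξ₁, …, ξₙ ∈ H be unit vectors such that |⟨ξᵢ, ξⱼ⟩| ≤ ε for all 1 ≤ i < j ≤ n and ⟨η, ξᵢ⟩ = ⟨η, ξⱼ⟩ for all 1 ≤ i, j ≤ n. If ε ≤ 1/(2n) and ε^{-1/2} ≤ n ≤ 2·ε^{-1/2}, then |⟨η, ξᵢ⟩| ≤ 5·ε^{1/4} for every 1 ≤ i ≤ n. -/

import Mathlib

/-!
Put `S = ∑ ξᵢ`. If `c` is the common value of `⟨η, ξᵢ⟩`, Cauchy–Schwarz gives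
`n ‖c‖ = ‖⟨η, S⟩‖ ≤ ‖S‖`, while expanding `‖S‖²` into the `n` diagonal terms `1` and the
`n² - n` off-diagonal terms of size at most `ε` gives `‖S‖² ≤ n + n² ε`. Hence
`‖c‖² ≤ 1/n + ε`, and both summands are at most `√ε` once `ε^{-1/2} ≤ n` and `ε ≤ 1`,
so that `‖c‖ ≤ √2 ε^{1/4}`.
-/

open Finset RCLike

section AlmostOrthonormal

variable {𝕜 E ι : Type*} [RCLike 𝕜] [NormedAddCommGroup E] [InnerProductSpace 𝕜 E] [Fintype ι]

local notation "⟪" x ", " y "⟫" => @inner 𝕜 _ _ x y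

theorem norm_sum_sq_le_of_norm_inner_le {ξ : ι → E} {ε : ℝ} (hξ : ∀ i, ‖ξ i‖ = 1)
    (hε : ∀ i j, i ≠ j → ‖⟪ξ i, ξ j⟫‖ ≤ ε) :
    ‖∑ i, ξ i‖ ^ 2 ≤ Fintype.card ι * (1 - ε) + Fintype.card ι ^ 2 * ε := by
  classical
  have entry_le (i j : ι) : ‖⟪ξ i, ξ j⟫‖ ≤ ε + if i = j then 1 - ε else 0 := by
    by_cases hij : i = j
    · simp [hij, inner_self_eq_norm_sq_to_K, hξ]
    · simpa [hij] using hε i j hij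
  calc ‖∑ i, ξ i‖ ^ 2 = re ⟪∑ i, ξ i, ∑ j, ξ j⟫ := (inner_self_eq_norm_sq _).symm
    _ ≤ ‖∑ i, ∑ j, ⟪ξ i, ξ j⟫‖ := by
        rw [sum_inner]
        simp only [inner_sum]
        exact re_le_norm _
    _ ≤ ∑ i, ∑ j, ‖⟪ξ i, ξ j⟫‖ :=
        (norm_sum_le _ _).trans (sum_le_sum fun i _ => norm_sum_le _ _)
    _ ≤ ∑ i : ι, ∑ j : ι, (ε + if i = j then 1 - ε else 0) :=
        sum_le_sum fun i _ => sum_le_sum fun j _ => entry_le i j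
    _ = Fintype.card ι * (1 - ε) + Fintype.card ι ^ 2 * ε := by
        simp only [sum_add_distrib, sum_const, Finset.card_univ, nsmul_eq_mul, sum_ite_eq,
          mem_univ, ↓reduceIte]
        ring

theorem card_mul_norm_le_norm_sum_of_inner_eq {η : E} {ξ : ι → E} {c : 𝕜}
    (hc : ∀ i, ⟪η, ξ i⟫ = c) : Fintype.card ι * ‖c‖ ≤ ‖η‖ * ‖∑ i, ξ i‖ := by
  have h : ⟪η, ∑ i, ξ i⟫ = Fintype.card ι * c := by simp [inner_sum, hc, Finset.card_univ]
  simpa [h] using norm_inner_le_norm (𝕜 := 𝕜) η (∑ i, ξ i)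

theorem norm_sq_le_inv_card_add_of_inner_eq [Nonempty ι] {η : E} {ξ : ι → E} {c : 𝕜} {ε : ℝ}
    (hη : ‖η‖ = 1) (hξ : ∀ i, ‖ξ i‖ = 1) (hε : ∀ i j, i ≠ j → ‖⟪ξ i, ξ j⟫‖ ≤ ε)
    (hε0 : 0 ≤ ε) (hc : ∀ i, ⟪η, ξ i⟫ = c) :
    ‖c‖ ^ 2 ≤ 1 / Fintype.card ι + ε := by
  have hN : (0 : ℝ) < Fintype.card ι := by exact_mod_cast Fintype.card_pos
  set N : ℝ := ((Fintype.card ι : ℕ) : ℝ)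
  have hS := card_mul_norm_le_norm_sum_of_inner_eq hc
  rw [hη, one_mul] at hS
  have key : N ^ 2 * ‖c‖ ^ 2 ≤ N ^ 2 * (1 / N + ε) :=
    calc N ^ 2 * ‖c‖ ^ 2 = (N * ‖c‖) ^ 2 := by ring
      _ ≤ ‖∑ i, ξ i‖ ^ 2 := by gcongr
      _ ≤ N * (1 - ε) + N ^ 2 * ε := norm_sum_sq_le_of_norm_inner_le hξ hε
      _ ≤ N ^ 2 * (1 / N + ε) := by
          field_simp
          nlinarith
  exact le_of_mul_le_mul_left key (by positivity)

end AlmostOrthonormal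

theorem le_sqrt_two_mul_rpow_of_sq_le_inv_add {x ε N : ℝ} (hx : 0 ≤ x) (hε0 : 0 < ε)
    (hε1 : ε ≤ 1) (hN : ε ^ (-(1 : ℝ) / 2) ≤ N) (h : x ^ 2 ≤ 1 / N + ε) :
    x ≤ √2 * ε ^ ((1 : ℝ) / 4) := by
  set q := ε ^ ((1 : ℝ) / 4) with hq
  have hq0 : 0 < q := by positivity
  have hq4 : q ^ 4 = ε := by
    rw [hq, ← Real.rpow_natCast, ← Real.rpow_mul hε0.le]
    norm_num
  have hsqrt : ε ^ (-(1 : ℝ) / 2) = (q ^ 2)⁻¹ := by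
    rw [hq, ← Real.rpow_natCast, ← Real.rpow_mul hε0.le, ← Real.rpow_neg_one,
      ← Real.rpow_mul (by positivity)]
    norm_num
  have hinvN : 1 / N ≤ q ^ 2 := by
    rw [hsqrt] at hN
    rw [one_div]
    exact inv_le_of_inv_le₀ (by positivity) hN
  have hεq : ε ≤ q ^ 2 := by
    have hq1 : q ≤ 1 := by
      contrapose! hε1
      rw [← hq4]
      exact one_lt_pow₀ hε1 (by norm_num)
    nlinarith
  have hx2 : x ^ 2 ≤ (√2 * q) ^ 2 := by
    rw [mul_pow, Real.sq_sqrt zero_le_two]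
    linarith
  exact (pow_le_pow_iff_left₀ hx (by positivity) two_ne_zero).mp hx2

theorem almost_orthogonal_vectors_bound'_general
    {H : Type*} [NormedAddCommGroup H] [InnerProductSpace ℂ H]
    (n : ℕ) (ε : ℝ) (hε0 : 0 < ε)
    (η : H) (ξ : Fin n → H)
    (hη : ‖η‖ = 1) (hξ : ∀ i, ‖ξ i‖ = 1)
    (horth : ∀ i j : Fin n, i < j → ‖(inner ℂ (ξ i) (ξ j) : ℂ)‖ ≤ ε)
    (heq : ∀ i j : Fin n, (inner ℂ η (ξ i) : ℂ) = (inner ℂ η (ξ j) : ℂ))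
    (hε : ε ≤ 1 / (2 * n))
    (hlow : ε ^ (-(1 : ℝ) / 2) ≤ (n : ℝ)) :
    ∀ i : Fin n, ‖(inner ℂ η (ξ i) : ℂ)‖ ≤ 5 * ε ^ ((1 : ℝ) / 4) := by
  intro i
  have : Nonempty (Fin n) := ⟨i⟩
  have hpair : ∀ j k, j ≠ k → ‖(inner ℂ (ξ j) (ξ k) : ℂ)‖ ≤ ε := by
    intro j k hjk
    rcases hjk.lt_or_gt with h | h
    · exact horth j k h
    · rw [norm_inner_symm]
      exact horth k j h
  have hc := norm_sq_le_inv_card_add_of_inner_eq hη hξ hpair hε0.le (fun j => heq j i)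
  rw [Fintype.card_fin] at hc
  have hε1 : ε ≤ 1 := by
    have : (1 : ℝ) ≤ n := by exact_mod_cast i.pos
    calc ε ≤ 1 / (2 * n) := hε
      _ ≤ 1 := by rw [div_le_one (by positivity)]; linarith
  calc ‖(inner ℂ η (ξ i) : ℂ)‖ ≤ √2 * ε ^ ((1 : ℝ) / 4) :=
        le_sqrt_two_mul_rpow_of_sq_le_inv_add (norm_nonneg _) hε0 hε1 hlow hc
    _ ≤ 5 * ε ^ ((1 : ℝ) / 4) := by
        gcongr
        rw [Real.sqrt_le_iff]
        norm_num

theorem almost_orthogonal_vectors_bound'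
    {H : Type*} [NormedAddCommGroup H] [InnerProductSpace ℂ H]
    (n : ℕ) (hn : 1 ≤ n) (ε : ℝ) (hε0 : 0 < ε)
    (η : H) (ξ : Fin n → H)
    (hη : ‖η‖ = 1) (hξ : ∀ i, ‖ξ i‖ = 1)
    (horth : ∀ i j : Fin n, i < j → ‖(inner ℂ (ξ i) (ξ j) : ℂ)‖ ≤ ε)
    (heq : ∀ i j : Fin n, (inner ℂ η (ξ i) : ℂ) = (inner ℂ η (ξ j) : ℂ))
    (hε : ε ≤ 1 / (2 * n))
    (hlow : ε ^ (-(1 : ℝ) / 2) ≤ (n : ℝ))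
    (hhigh : (n : ℝ) ≤ 2 * ε ^ (-(1 : ℝ) / 2)) :
    ∀ i : Fin n, ‖(inner ℂ η (ξ i) : ℂ)‖ ≤ 5 * ε ^ ((1 : ℝ) / 4) :=
  almost_orthogonal_vectors_bound'_general n ε hε0 η ξ hη hξ horth heq hε hlow
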